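/- Let F be a free group of finite rank n ≥ 2 with free basis X, let |w| denote the word length of w ∈ F with respect to X (the length of the reduced word representing w), and for u, v ∈ F let (u|v) = ½(|u| + |v| − |u⁻¹v|). If φ : F → F is a nontrivial endomorphism that is not injective, then the BRP fails for φ: there exists p ≥ 0 such that for every N ≥ 0 there exist u, v ∈ F with (u|v) ≤ p and (φ(u)|φ(v)) ≥ N. -/

import Mathlib

/-!
Take `a ≠ 1` in the kernel of `φ` and compare `u` with `v = a * u`. Their images coincide,
so `(φ u | φ v) = |φ u|`, and `|φ u|` is unbounded along `u = t · g ^ m` with `φ g ≠ 1`: the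
free group is torsion-free and its balls are finite. Since there are at least four letters,
the first letter `t` can be chosen so that `u`, `a * u` and `u⁻¹ * (a * u)` are reduced as
written; then `|u⁻¹ v| = |u| + |v|`, i.e. `(u | v) = 0`.
-/

namespace Paper

/-- The Gromov product `(u|v)` at the identity in a free group, with respect to the
word length `FreeGroup.norm` for the free basis. -/
noncomputable def fgp {X : Type*} [DecidableEq X] (u v : FreeGroup X) : ℝ :=
  ((FreeGroup.norm u : ℝ) + (FreeGroup.norm v : ℝ) - (FreeGroup.norm (u⁻¹ * v) : ℝ)) / 2

end Paper

namespace FreeGroup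

variable {X : Type*}

theorem letter_pair_reduced_iff_ne_right (p q : X × Bool) :
    (p.1 = q.1 → p.2 = q.2) ↔ q ≠ (p.1, !p.2) := by
  obtain ⟨x, b⟩ := p
  obtain ⟨y, c⟩ := q
  cases b <;> cases c <;> simp [eq_comm]

theorem letter_pair_reduced_iff_ne_left (p q : X × Bool) :
    (p.1 = q.1 → p.2 = q.2) ↔ p ≠ (q.1, !q.2) := by
  obtain ⟨x, b⟩ := p
  obtain ⟨y, c⟩ := q
  cases b <;> cases c <;> simp [eq_comm]

theorem exists_letter_notMem [Fintype X] (hX : 2 ≤ Fintype.card X)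
    (o₁ o₂ o₃ : Option (X × Bool)) : ∃ t : X × Bool, t ∉ o₁ ∧ t ∉ o₂ ∧ t ∉ o₃ := by
  classical
  have hcard : (o₁.toFinset ∪ o₂.toFinset ∪ o₃.toFinset).card
      < (Finset.univ : Finset (X × Bool)).card := by
    have h₁ := Finset.card_union_le (o₁.toFinset ∪ o₂.toFinset) o₃.toFinset
    have h₂ := Finset.card_union_le o₁.toFinset o₂.toFinset
    have hle_one (o : Option (X × Bool)) : o.toFinset.card ≤ 1 := by cases o <;> simp
    have := hle_one o₁; have := hle_one o₂; have := hle_one o₃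
    rw [Finset.card_univ, Fintype.card_prod, Fintype.card_bool]
    omega
  obtain ⟨t, -, ht⟩ := Finset.exists_mem_notMem_of_card_lt_card hcard
  simp only [Finset.mem_union, Option.mem_toFinset, not_or] at ht
  exact ⟨t, ht.1.1, ht.1.2, ht.2⟩

variable [DecidableEq X]

theorem finite_setOf_norm_le [Finite X] (n : ℕ) : {x : FreeGroup X | norm x ≤ n}.Finite :=
  (List.finite_length_le (X × Bool) n).preimage toWord_injective.injOn

theorem exists_lt_norm_pow [Finite X] {h : FreeGroup X} (hh : h ≠ 1) (n : ℕ) :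
    ∃ m : ℕ, n < norm (h ^ m) := by
  have hinj : Function.Injective (fun m : ℕ ↦ h ^ m) :=
    injective_pow_iff_not_isOfFinOrder.mpr ((isOfFinOrder_iff_eq_one h).not.mpr hh)
  by_contra! hbound
  exact Set.infinite_range_of_injective hinj
    ((finite_setOf_norm_le n).subset (Set.range_subset_iff.mpr hbound))

theorem norm_le_norm_mul_add_norm (x y : FreeGroup X) : norm y ≤ norm (x * y) + norm x :=
  calc norm y = norm (x⁻¹ * (x * y)) := by rw [inv_mul_cancel_left]
    _ ≤ norm x⁻¹ + norm (x * y) := norm_mul_le _ _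
    _ = norm (x * y) + norm x := by rw [norm_inv_eq, add_comm]

theorem toWord_mul_eq_append {x y : FreeGroup X}
    (h : ∀ p ∈ x.toWord.getLast?, ∀ q ∈ y.toWord.head?, p.1 = q.1 → p.2 = q.2) :
    (x * y).toWord = x.toWord ++ y.toWord := by
  rw [toWord_mul]
  exact IsReduced.reduce_eq (isReduced_toWord.append isReduced_toWord h)

theorem norm_mul_eq_add {x y : FreeGroup X}
    (h : ∀ p ∈ x.toWord.getLast?, ∀ q ∈ y.toWord.head?, p.1 = q.1 → p.2 = q.2) :
    norm (x * y) = norm x + norm y := by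
  simp only [FreeGroup.norm, toWord_mul_eq_append h, List.length_append]

end FreeGroup

namespace Paper

section

open FreeGroup

variable {X : Type*} [DecidableEq X]

theorem fgp_self (x : FreeGroup X) : fgp x x = norm x := by
  simp [fgp]

theorem exists_letter_fgp_mul_eq_zero [Fintype X] (hX : 2 ≤ Fintype.card X)
    {a : FreeGroup X} (ha : a ≠ 1) (w : FreeGroup X) :
    ∃ t : X × Bool, fgp (mk [t] * w) (a * (mk [t] * w)) = 0 := by
  -- `(p.1, !p.2)` is the letter inverse to `p`
  obtain ⟨t, ht₁, ht₂, ht₃⟩ := exists_letter_notMem hX a.toWord.head?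
    (a.toWord.getLast?.map fun p ↦ (p.1, !p.2)) (w.toWord.head?.map fun q ↦ (q.1, !q.2))
  refine ⟨t, ?_⟩
  set u := mk [t] * w
  have hu : u.toWord = t :: w.toWord := toWord_mul_eq_append fun p hp q hq ↦ by
    rw [toWord_mk, reduce_singleton, List.getLast?_singleton, Option.mem_some_iff] at hp
    subst hp
    exact (letter_pair_reduced_iff_ne_left _ q).mpr
      fun h ↦ ht₃ (Option.mem_map.mpr ⟨q, hq, h.symm⟩)
  have hau : (a * u).toWord = a.toWord ++ u.toWord := toWord_mul_eq_append fun p hp q hq ↦ by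
    rw [hu, List.head?_cons, Option.mem_some_iff] at hq
    subst hq
    exact (letter_pair_reduced_iff_ne_right p _).mpr
      fun h ↦ ht₂ (Option.mem_map.mpr ⟨p, hp, h.symm⟩)
  have hlast : u⁻¹.toWord.getLast? = some (t.1, !t.2) := by
    simp [toWord_inv, hu, invRev]
  have hhead : (a * u).toWord.head? = a.toWord.head? := by
    rw [hau, List.head?_append_of_ne_nil _ (toWord_eq_nil_iff.not.mpr ha)]
  have hnorm : norm (u⁻¹ * (a * u)) = norm u⁻¹ + norm (a * u) :=
    norm_mul_eq_add fun p hp q hq ↦ by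
      rw [hlast, Option.mem_some_iff] at hp
      rw [hhead] at hq
      subst hp
      rw [letter_pair_reduced_iff_ne_right, Bool.not_not]
      rintro rfl
      exact ht₁ hq
  simp [fgp, hnorm, norm_inv_eq]

end

/-- For a nontrivial non-injective endomorphism of a free group of finite rank at least `2`,
the bounded reduction property fails. -/
theorem brp_fails_of_not_injective
    {X : Type*} [Fintype X] [DecidableEq X] (hX : 2 ≤ Fintype.card X)
    (φ : FreeGroup X →* FreeGroup X)
    (hnt : ∃ g : FreeGroup X, φ g ≠ 1)
    (hni : ¬ Function.Injective φ) :
    ∃ p : ℝ, 0 ≤ p ∧ ∀ N : ℝ, 0 ≤ N →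
      ∃ u v : FreeGroup X, fgp u v ≤ p ∧ N ≤ fgp (φ u) (φ v) := by
  obtain ⟨g, hg⟩ := hnt
  obtain ⟨a, hφa, ha⟩ : ∃ a, φ a = 1 ∧ a ≠ 1 := by
    simpa [injective_iff_map_eq_one] using hni
  set C := Finset.univ.sup fun t : X × Bool ↦ FreeGroup.norm (φ (FreeGroup.mk [t]))
  refine ⟨0, le_rfl, fun N _ ↦ ?_⟩
  obtain ⟨m, hm⟩ := FreeGroup.exists_lt_norm_pow hg (⌈N⌉₊ + C)
  obtain ⟨t, ht⟩ := exists_letter_fgp_mul_eq_zero hX ha (g ^ m)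
  refine ⟨FreeGroup.mk [t] * g ^ m, a * (FreeGroup.mk [t] * g ^ m), ht.le, ?_⟩
  have hC : FreeGroup.norm (φ (FreeGroup.mk [t])) ≤ C :=
    Finset.le_sup (f := fun t ↦ FreeGroup.norm (φ (FreeGroup.mk [t]))) (Finset.mem_univ t)
  have hpow := FreeGroup.norm_le_norm_mul_add_norm (φ (FreeGroup.mk [t])) (φ g ^ m)
  rw [map_mul φ a, hφa, one_mul, fgp_self, map_mul, map_pow]
  calc N ≤ ⌈N⌉₊ := Nat.le_ceil N
    _ ≤ FreeGroup.norm (φ (FreeGroup.mk [t]) * φ g ^ m) := by exact_mod_cast (by omega)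

end Paper
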